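/- Let k be a field, G a finite group, and β a normalized 3-cocycle on G with values in kˣ. Let R := Σ_{g∈G} ⟨g,e⟩ ⊗ (Σ_{h∈G} ⟨h,g⟩) in D^β(k[G]) ⊗_k D^β(k[G]). Then R intertwines the comultiplication and its opposite: for every a ∈ D^β(k[G]), Δ^op(a)·R = R·Δ(a), where Δ^op := τ ∘ Δ and τ is the flip of the two tensor factors. -/

import Mathlib

open scoped BigOperators TensorProduct

namespace StringyOrbifold

/-- A normalized 3-cocycle on `G` with values in `kˣ`. -/
def IsNormalized3Cocycle {k G : Type*} [Field k] [Group G] (β : G → G → G → kˣ) : Prop :=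
  (∀ g h l m : G, β g h l * β g (h * l) m * β h l m = β (g * h) l m * β g h (l * m)) ∧
  (∀ g h : G, β 1 g h = 1 ∧ β g 1 h = 1 ∧ β g h 1 = 1)

/-- A normalized 2-cocycle on `G` with values in `kˣ`. -/
def IsNormalized2Cocycle {k G : Type*} [Field k] [Group G] (α : G → G → kˣ) : Prop :=
  (∀ g h l : G, α g h * α (g * h) l = α h l * α g (h * l)) ∧
  (∀ g : G, α g 1 = 1 ∧ α 1 g = 1)

/-- `θ_g(x,y) = β(g,x,y)·β(x,y,(xy)⁻¹g(xy)) / β(x,x⁻¹gx,y)`. -/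
def ddTheta {k G : Type*} [Field k] [Group G] (β : G → G → G → kˣ) (g x y : G) : kˣ :=
  β g x y * β x y ((x * y)⁻¹ * g * (x * y)) / β x (x⁻¹ * g * x) y

/-- `γ_x(g₁,g₂) = β(g₁,g₂,x)·β(x,x⁻¹g₁x,x⁻¹g₂x) / β(g₁,x,x⁻¹g₂x)`. -/
def ddGamma {k G : Type*} [Field k] [Group G] (β : G → G → G → kˣ) (x g1 g2 : G) : kˣ :=
  β g1 g2 x * β x (x⁻¹ * g1 * x) (x⁻¹ * g2 * x) / β g1 x (x⁻¹ * g2 * x)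

/-- The trivial 3-cocycle. -/
def trivCocycle (k G : Type*) [Field k] [Group G] : G → G → G → kˣ := fun _ _ _ => 1

/-- The underlying `k`-vector space of the twisted Drinfel'd double `D^β(k[G])`:
the free `k`-module on the basis `⟨g,x⟩`, `(g,x) ∈ G × G`, realized as functions. -/
abbrev DD (k G : Type*) := G × G → k

/-- The function model for `D^β(k[G]) ⊗ D^β(k[G])`. -/
abbrev DD2 (k G : Type*) := (G × G) × (G × G) → k

/-- The function model for the threefold tensor power of `D^β(k[G])`. -/
abbrev DD3 (k G : Type*) := (G × G) × (G × G) × (G × G) → k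

/-- The basis element `⟨g,x⟩` of `D^β(k[G])`. -/
def ddBasis {k G : Type*} [Field k] [DecidableEq G] (g x : G) : DD k G :=
  fun p => if p = (g, x) then 1 else 0

/-- The multiplication of `D^β(k[G])`, the bilinear extension of
`⟨g,x⟩·⟨h,y⟩ = δ_{g,xhx⁻¹} θ_g(x,y) ⟨g,xy⟩`. -/
def ddMul {k G : Type*} [Field k] [Group G] [Fintype G]
    (β : G → G → G → kˣ) (a b : DD k G) : DD k G :=
  fun p => ∑ x : G, a (p.1, x) * b (x⁻¹ * p.1 * x, x⁻¹ * p.2) * (ddTheta β p.1 x (x⁻¹ * p.2) : k)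

/-- The identity `Σ_{h∈G} ⟨h,e⟩` of `D^β(k[G])`. -/
def ddOne (k G : Type*) [Field k] [Group G] [Fintype G] [DecidableEq G] : DD k G :=
  ∑ g : G, ddBasis g 1

/-- The elementary tensor `a ⊗ b` in the function model of `D^β(k[G]) ⊗ D^β(k[G])`. -/
def ddTensor {k G : Type*} [Field k] (a b : DD k G) : DD2 k G :=
  fun p => a p.1 * b p.2

/-- The elementary tensor `a ⊗ b ⊗ c` in the function model of the triple tensor power. -/
def ddTensor3 {k G : Type*} [Field k] (a b c : DD k G) : DD3 k G :=
  fun p => a p.1 * b p.2.1 * c p.2.2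

/-- Componentwise multiplication on `D^β(k[G]) ⊗ D^{β'}(k[G])` in the function model. -/
def dd2Mul {k G : Type*} [Field k] [Group G] [Fintype G]
    (β β' : G → G → G → kˣ) (a b : DD2 k G) : DD2 k G :=
  fun p => ∑ x : G, ∑ y : G,
    a ((p.1.1, x), (p.2.1, y)) *
      b ((x⁻¹ * p.1.1 * x, x⁻¹ * p.1.2), (y⁻¹ * p.2.1 * y, y⁻¹ * p.2.2)) *
      (ddTheta β p.1.1 x (x⁻¹ * p.1.2) : k) * (ddTheta β' p.2.1 y (y⁻¹ * p.2.2) : k)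

/-- Componentwise multiplication on the threefold tensor power of `D^β(k[G])`. -/
def dd3Mul {k G : Type*} [Field k] [Group G] [Fintype G]
    (β : G → G → G → kˣ) (a b : DD3 k G) : DD3 k G :=
  fun p => ∑ x : G, ∑ y : G, ∑ z : G,
    a ((p.1.1, x), (p.2.1.1, y), (p.2.2.1, z)) *
      b ((x⁻¹ * p.1.1 * x, x⁻¹ * p.1.2), (y⁻¹ * p.2.1.1 * y, y⁻¹ * p.2.1.2),
        (z⁻¹ * p.2.2.1 * z, z⁻¹ * p.2.2.2)) *
      (ddTheta β p.1.1 x (x⁻¹ * p.1.2) : k) * (ddTheta β p.2.1.1 y (y⁻¹ * p.2.1.2) : k) *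
      (ddTheta β p.2.2.1 z (z⁻¹ * p.2.2.2) : k)

/-- The comultiplication of `D^β(k[G])`: the linear extension of
`Δ(⟨g,x⟩) = Σ_{g₁g₂=g} γ_x(g₁,g₂) ⟨g₁,x⟩ ⊗ ⟨g₂,x⟩`. -/
def ddComul {k G : Type*} [Field k] [Group G] [DecidableEq G]
    (β : G → G → G → kˣ) (a : DD k G) : DD2 k G :=
  fun p =>
    if p.1.2 = p.2.2 then (ddGamma β p.1.2 p.1.1 p.2.1 : k) * a (p.1.1 * p.2.1, p.1.2) else 0

/-- The map `id ⊗ Δ` from `D^β(k[G])^{⊗2}` to `D^β(k[G])^{⊗3}` in the function model. -/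
def idTensorComul {k G : Type*} [Field k] [Group G] [DecidableEq G]
    (β : G → G → G → kˣ) (u : DD2 k G) : DD3 k G :=
  fun p => if p.2.1.2 = p.2.2.2 then
      (ddGamma β p.2.1.2 p.2.1.1 p.2.2.1 : k) * u (p.1, (p.2.1.1 * p.2.2.1, p.2.1.2))
    else 0

/-- The map `Δ ⊗ id` from `D^β(k[G])^{⊗2}` to `D^β(k[G])^{⊗3}` in the function model. -/
def comulTensorId {k G : Type*} [Field k] [Group G] [DecidableEq G]
    (β : G → G → G → kˣ) (u : DD2 k G) : DD3 k G :=
  fun p => if p.1.2 = p.2.1.2 then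
      (ddGamma β p.1.2 p.1.1 p.2.1.1 : k) * u ((p.1.1 * p.2.1.1, p.1.2), p.2.2)
    else 0

/-- The flip of the two tensor factors. -/
def ddSwap {k G : Type*} (u : DD2 k G) : DD2 k G := fun p => u (p.2, p.1)

/-- The counit `ε(⟨g,x⟩) = δ_{g,e}` of `D^β(k[G])`. -/
def ddCounit {k G : Type*} [Field k] [Group G] [Fintype G] (a : DD k G) : k :=
  ∑ x : G, a (1, x)

/-- The injection `k[G]^* → D^β(k[G])`, `δ_g ↦ ⟨g,e⟩`. -/
def ddIota {k G : Type*} [Field k] [Group G] [DecidableEq G] (f : G → k) : DD k G :=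
  fun p => if p.2 = 1 then f p.1 else 0

/-- The diagonal map `D^{ββ'}(k[G]) → D^β(k[G]) ⊗ D^{β'}(k[G])`, `⟨g,x⟩ ↦ ⟨g,x⟩ ⊗ ⟨g,x⟩`. -/
def ddDiag {k G : Type*} [Field k] [DecidableEq G] (a : DD k G) : DD2 k G :=
  fun p => if p.1 = p.2 then a p.1 else 0

/-- The antipode of `D^β(k[G])`: the linear extension of
`S(⟨g,x⟩) = (θ_{g⁻¹}(x,x⁻¹)·γ_x(g,g⁻¹))⁻¹ ⟨x⁻¹g⁻¹x, x⁻¹⟩`. -/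
def ddAntipode {k G : Type*} [Field k] [Group G] (β : G → G → G → kˣ) (a : DD k G) : DD k G :=
  fun p =>
    (((ddTheta β (p.2⁻¹ * p.1 * p.2) p.2⁻¹ p.2 *
        ddGamma β p.2⁻¹ (p.2⁻¹ * p.1⁻¹ * p.2) (p.2⁻¹ * p.1 * p.2))⁻¹ : kˣ) : k) *
      a (p.2⁻¹ * p.1⁻¹ * p.2, p.2⁻¹)

/-- The antipode of the untwisted double `D(k[G])`: `S(⟨g,x⟩) = ⟨x⁻¹g⁻¹x, x⁻¹⟩`. -/
def ddAntipode0 {k G : Type*} [Field k] [Group G] (a : DD k G) : DD k G :=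
  fun p => a (p.2⁻¹ * p.1⁻¹ * p.2, p.2⁻¹)

/-- The operator `φ(x)` on `D^β(k[G])^{comm}`: the linear extension of
`φ(x)(⟨h,y⟩) = (θ_{xhx⁻¹}(x,y)/θ_{xhx⁻¹}(xyx⁻¹,x))·⟨xhx⁻¹, xyx⁻¹⟩`. -/
def ddPhi {k G : Type*} [Field k] [Group G] (β : G → G → G → kˣ) (x : G) (a : DD k G) :
    DD k G :=
  fun p => ((ddTheta β p.1 x (x⁻¹ * p.2 * x) / ddTheta β p.1 p.2 x : kˣ) : k) *
    a (x⁻¹ * p.1 * x, x⁻¹ * p.2 * x)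

/-- The span of the basis elements `⟨g,x⟩` with `gx = xg`, i.e. `D^β(k[G])^{comm}`. -/
def ddCommSpan (k G : Type*) [Field k] [Group G] [DecidableEq G] : Submodule k (DD k G) :=
  Submodule.span k {v : DD k G | ∃ g x : G, g * x = x * g ∧ v = ddBasis g x}

/-- The underlying space of the twisted group ring `k^α[G]`. -/
abbrev TG (k G : Type*) := G → k

/-- The basis element `1_g` of `k^α[G]`. -/
def tgBasis {k G : Type*} [Field k] [DecidableEq G] (g : G) : TG k G :=
  fun z => if z = g then 1 else 0

/-- The multiplication `1_g·1_h = α(g,h) 1_{gh}` of the twisted group ring `k^α[G]`. -/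
def tgMul {k G : Type*} [Field k] [Group G] [Fintype G] (α : G → G → kˣ) (a b : TG k G) :
    TG k G :=
  fun z => ∑ x : G, a x * b (x⁻¹ * z) * (α x (x⁻¹ * z) : k)

/-- The identity `1_e` of `k^α[G]`. -/
def tgOne (k G : Type*) [Field k] [Group G] [DecidableEq G] : TG k G := tgBasis 1

/-- The inverse `α(g,g⁻¹)⁻¹·1_{g⁻¹}` of the basis element `1_g` in `k^α[G]`. -/
def tgInvBasis {k G : Type*} [Field k] [Group G] [DecidableEq G] (α : G → G → kˣ) (g : G) :
    TG k G :=
  (((α g g⁻¹)⁻¹ : kˣ) : k) • tgBasis g⁻¹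

/-- Conjugation `ρ(g)(a) = 1_g · a · (1_g)⁻¹` in the twisted group ring `k^α[G]`. -/
def tgConj {k G : Type*} [Field k] [Group G] [Fintype G] [DecidableEq G]
    (α : G → G → kˣ) (g : G) (a : TG k G) : TG k G :=
  tgMul α (tgBasis g) (tgMul α a (tgInvBasis α g))

theorem comm_inv_left {G : Type*} [Group G] {g x : G} (h : x * g = g * x) :
    x⁻¹ * g = g * x⁻¹ := by
  rw [eq_mul_inv_iff_mul_eq, mul_assoc, ← h, ← mul_assoc, inv_mul_cancel, one_mul]

theorem comm_inv_mul {G : Type*} [Group G] {g x z : G} (hx : x * g = g * x)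
    (hz : z * g = g * z) : (x⁻¹ * z) * g = g * (x⁻¹ * z) := by
  rw [mul_assoc, hz, ← mul_assoc, comm_inv_left hx, mul_assoc]

/-- The index set `{(g,x) : x ∈ Z(g)}` of the direct sum `⊕_g k^{θ_g}[Z(g)]`. -/
abbrev CentPairs (G : Type*) [Group G] := Σ g : G, {x : G // x * g = g * x}

/-- The underlying space of `⊕_g k^{θ_g}[Z(g)]`. -/
abbrev TY (k G : Type*) [Group G] := CentPairs G → k

/-- The multiplication of `⊕_g k^{θ_g}[Z(g)]`: in the `g`-th summand,
`1_x·1_y = θ_g(x,y)·1_{xy}` for `x, y ∈ Z(g)`, and distinct summands multiply to `0`. -/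
def tyMul {k G : Type*} [Field k] [Group G] [Fintype G] [DecidableEq G]
    (β : G → G → G → kˣ) (a b : TY k G) : TY k G :=
  fun q => ∑ x : {x : G // x * q.1 = q.1 * x},
    a ⟨q.1, x⟩ * b ⟨q.1, ⟨(x : G)⁻¹ * (q.2 : G), comm_inv_mul x.2 q.2.2⟩⟩ *
      (ddTheta β q.1 (x : G) ((x : G)⁻¹ * (q.2 : G)) : k)

/-- The identity of `⊕_g k^{θ_g}[Z(g)]`. -/
def tyOne (k G : Type*) [Field k] [Group G] [DecidableEq G] : TY k G :=
  fun q => if (q.2 : G) = 1 then 1 else 0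

/-- The map `⊕_g k^{θ_g}[Z(g)] → D^β(k[G])` sending `1_x` in the `g`-th summand
to `⟨g,x⟩`. -/
def tyMap {k G : Type*} [Field k] [Group G] [DecidableEq G] (f : TY k G) : DD k G :=
  fun p => if h : p.2 * p.1 = p.1 * p.2 then f ⟨p.1, ⟨p.2, h⟩⟩ else 0

/-- The action of `D^{ββ'}(k[G])` on `A ⊗ B`, assigning to `⟨g,x⟩` the endomorphism
`ρ_A(⟨g,x⟩) ⊗ ρ_B(⟨g,x⟩)` and extending linearly. -/
noncomputable def ddTensorAction {k G A B : Type*} [Field k] [Group G] [Fintype G]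
    [DecidableEq G] [AddCommGroup A] [Module k A] [AddCommGroup B] [Module k B]
    (ρA : DD k G → (A →ₗ[k] A)) (ρB : DD k G → (B →ₗ[k] B)) (a : DD k G) :
    (A ⊗[k] B) →ₗ[k] (A ⊗[k] B) :=
  ∑ p : G × G, a p • TensorProduct.map (ρA (ddBasis p.1 p.2)) (ρB (ddBasis p.1 p.2))

/-!
Evaluated at `⟨A,X⟩ ⊗ ⟨B,Y⟩`, each of the two products `Δ^op(a)·R` and `R·Δ(a)` has a single
surviving term, and both vanish unless `Y = AX`. In that case they are `a(BA,X)` times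
`γ_X(B,A)·θ_B(X, X⁻¹AX)` and `γ_X(A, A⁻¹BA)·θ_B(A,X)` respectively, and after cancellation both
coefficients equal `β(B,A,X)·β(X, X⁻¹AX, X⁻¹A⁻¹BAX)`.
-/
def IsNormalized3Cochain {k G : Type*} [Field k] [Group G] (β : G → G → G → kˣ) : Prop :=
  ∀ g h : G, β 1 g h = 1 ∧ β g 1 h = 1 ∧ β g h 1 = 1

def ddR (k G : Type*) [Field k] [One G] [Fintype G] [DecidableEq G] : DD2 k G :=
  ∑ g : G, ddTensor (ddBasis g 1) (∑ h : G, ddBasis h g)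

section

variable {k G : Type*} [Field k] [Group G]

theorem ddTheta_one_left {β : G → G → G → kˣ} (hβ : IsNormalized3Cochain β) (g y : G) :
    ddTheta β g 1 y = 1 := by
  simp [ddTheta, (hβ _ _).1, (hβ _ _).2.1]

theorem ddTheta_one_right {β : G → G → G → kˣ} (hβ : IsNormalized3Cochain β) (g x : G) :
    ddTheta β g x 1 = 1 := by
  simp [ddTheta, (hβ _ _).2.1, (hβ _ _).2.2]

theorem ddGamma_mul_ddTheta_comm (β : G → G → G → kˣ) (g h x : G) :
    ddGamma β x h g * ddTheta β h x (x⁻¹ * g * x) =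
      ddGamma β x g (g⁻¹ * h * g) * ddTheta β h g x := by
  simp only [ddGamma, ddTheta, mul_assoc, mul_inv_rev, mul_inv_cancel_left]
  rw [div_mul_div_comm, div_mul_div_comm, div_eq_div_iff_mul_eq_mul]
  ac_rfl

variable [Fintype G] [DecidableEq G]

theorem ddR_apply (q : (G × G) × (G × G)) :
    ddR k G q = if q.1.2 = 1 ∧ q.2.2 = q.1.1 then 1 else 0 := by
  obtain ⟨⟨g, x⟩, h, y⟩ := q
  simp only [ddR, Finset.sum_apply, ddTensor, ddBasis, Prod.mk.injEq, ite_and, Finset.sum_ite_eq,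
    Finset.mem_univ, if_true, ite_mul, zero_mul]
  split_ifs <;> simp

theorem dd2Mul_swap_ddComul_ddR_apply {β : G → G → G → kˣ} (hβ : IsNormalized3Cochain β)
    (a : DD k G) (A X B Y : G) :
    dd2Mul β β (ddSwap (ddComul β a)) (ddR k G) ((A, X), (B, Y)) =
      if Y = A * X then ((ddGamma β X B A * ddTheta β B X (X⁻¹ * A * X) : kˣ) : k) * a (B * A, X)
      else 0 := by
  rw [dd2Mul, Fintype.sum_eq_single X, Fintype.sum_eq_single X]
  · by_cases hY : Y = A * X
    · simp [hY, ddR_apply, ddSwap, ddComul, ddTheta_one_right hβ, mul_assoc, mul_comm]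
    · simp [hY, ddR_apply, mul_assoc]
  · intro y hy
    simp [ddSwap, ddComul, hy]
  · intro x hx
    refine Finset.sum_eq_zero fun y _ => ?_
    simp [ddR_apply, inv_mul_eq_one, hx]

theorem dd2Mul_ddR_ddComul_apply {β : G → G → G → kˣ} (hβ : IsNormalized3Cochain β)
    (a : DD k G) (A X B Y : G) :
    dd2Mul β β (ddR k G) (ddComul β a) ((A, X), (B, Y)) =
      if Y = A * X then ((ddGamma β X A (A⁻¹ * B * A) * ddTheta β B A X : kˣ) : k) * a (B * A, X)
      else 0 := by
  rw [dd2Mul, Fintype.sum_eq_single 1, Fintype.sum_eq_single A]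
  · by_cases hY : Y = A * X
    · simp [hY, ddR_apply, ddComul, ddTheta_one_left hβ, mul_assoc, mul_comm]
    · have hX : X ≠ A⁻¹ * Y := fun h => hY (by rw [h, mul_inv_cancel_left])
      simp [ddR_apply, ddComul, hX, hY]
  · intro y hy
    simp [ddR_apply, hy]
  · intro x hx
    refine Finset.sum_eq_zero fun y _ => ?_
    simp [ddR_apply, hx]

end

/-- the `R`-matrix `R = Σ_g ⟨g,e⟩ ⊗ ⟨1,g⟩` intertwines `Δ` and `Δ^op`. -/
theorem stmt7 {k G : Type*} [Field k] [Group G] [Fintype G] [DecidableEq G]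
    (β : G → G → G → kˣ) (hβ : IsNormalized3Cocycle β) :
    ∀ a : DD k G,
      dd2Mul β β (ddSwap (ddComul β a))
        (∑ g : G, ddTensor (ddBasis g 1) (∑ h : G, ddBasis h g)) =
      dd2Mul β β (∑ g : G, ddTensor (ddBasis g 1) (∑ h : G, ddBasis h g))
        (ddComul β a) := by
  intro a
  funext ⟨⟨A, X⟩, B, Y⟩
  change dd2Mul β β _ (ddR k G) _ = dd2Mul β β (ddR k G) _ _
  rw [dd2Mul_swap_ddComul_ddR_apply hβ.2, dd2Mul_ddR_ddComul_apply hβ.2,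
    ddGamma_mul_ddTheta_comm]

end StringyOrbifold
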